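/- Let f₁, …, f_m : [0,1] → ℝ be continuous functions. Then for every element r of the ℝ-subalgebra of C[0,1] generated by f₁, …, f_m, the upper box dimension of the graph of r satisfies dim_B̄ G(r) ≤ max{dim_B̄ G(f₁), …, dim_B̄ G(f_m)}. -/

import Mathlib

open Set Filter Metric

noncomputable def coverNum {α : Type*} [PseudoMetricSpace α] (F : Set α) (δ : ℝ) : ℕ :=
  sInf {n : ℕ | ∃ t : Finset α, t.card = n ∧ F ⊆ ⋃ p ∈ t, Metric.closedBall p δ}

noncomputable def upperBoxDim {α : Type*} [PseudoMetricSpace α] (F : Set α) : ℝ :=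
  Filter.limsup (fun δ : ℝ => Real.log (coverNum F δ) / -Real.log δ)
    (nhdsWithin (0 : ℝ) (Set.Ioi 0))

noncomputable def lowerBoxDim {α : Type*} [PseudoMetricSpace α] (F : Set α) : ℝ :=
  Filter.liminf (fun δ : ℝ => Real.log (coverNum F δ) / -Real.log δ)
    (nhdsWithin (0 : ℝ) (Set.Ioi 0))

/-- Graph of `f` over the set `X`. -/
def fnGraphOn (f : ℝ → ℝ) (X : Set ℝ) : Set (ℝ × ℝ) := (fun x => (x, f x)) '' X

/-- Graph of `f` over `[0,1]`. -/
def G (f : ℝ → ℝ) : Set (ℝ × ℝ) := fnGraphOn f (Set.Icc 0 1)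

def graphC (f : C(↥(Set.Icc (0:ℝ) 1), ℝ)) : Set (ℝ × ℝ) :=
  Set.range fun x : ↥(Set.Icc (0:ℝ) 1) => ((x : ℝ), f x)

/-! For continuous `g` on `[0, 1]` and `0 < δ ≤ 1`, the number of `δ`-balls needed to cover the
graph of `g` is comparable, up to absolute constants, to `(1 + oscSum g δ) / δ`, where `oscSum g δ`
adds up the oscillations of `g` over the columns of width `δ`. Column oscillation is subadditive
under sums and obeys the Leibniz bound `osc (g₁ g₂) ≤ ‖g₁‖ osc g₂ + ‖g₂‖ osc g₁` under products, so
by induction over the subalgebra `oscSum r δ ≤ C ∑ᵢ oscSum fᵢ δ`. Hence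
`N_δ(G r) ≤ K maxᵢ N_δ(G fᵢ)` with `K` independent of `δ`, and `log K / -log δ → 0`. -/

open Topology

section CoverNum

variable {α : Type*} [PseudoMetricSpace α] {F : Set α} {δ : ℝ}

lemma coverNum_le_card (t : Finset α) (h : F ⊆ ⋃ p ∈ t, closedBall p δ) :
    coverNum F δ ≤ t.card :=
  Nat.sInf_le ⟨t, rfl, h⟩

lemma coverNum_le_sum_card {ι : Type*} (s : Finset ι) (t : ι → Finset α)
    (h : F ⊆ ⋃ i ∈ s, ⋃ p ∈ t i, closedBall p δ) :
    coverNum F δ ≤ ∑ i ∈ s, (t i).card := by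
  classical
  refine (coverNum_le_card (s.biUnion t) ?_).trans Finset.card_biUnion_le
  rwa [Finset.set_biUnion_biUnion]

lemma IsCompact.exists_card_eq_coverNum (hF : IsCompact F) (hδ : 0 < δ) :
    ∃ t : Finset α, t.card = coverNum F δ ∧ F ⊆ ⋃ p ∈ t, closedBall p δ := by
  obtain ⟨s, -, hs, hcover⟩ := finite_cover_balls_of_compact hF hδ
  have hcover' : F ⊆ ⋃ p ∈ hs.toFinset, closedBall p δ := by
    simpa using hcover.trans (iUnion₂_mono fun p _ => ball_subset_closedBall)
  exact Nat.sInf_mem (s := {n | ∃ t : Finset α, t.card = n ∧ F ⊆ ⋃ p ∈ t, closedBall p δ})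
    ⟨_, hs.toFinset, rfl, hcover'⟩

lemma IsCompact.coverNum_pos (hF : IsCompact F) (hne : F.Nonempty) (hδ : 0 < δ) :
    0 < coverNum F δ := by
  obtain ⟨t, ht, hcover⟩ := hF.exists_card_eq_coverNum hδ
  obtain ⟨x, hx⟩ := hne
  obtain ⟨p, hp, -⟩ := mem_iUnion₂.mp (hcover hx)
  exact ht ▸ Finset.card_pos.mpr ⟨p, hp⟩

end CoverNum

lemma limsup_le_iSup_limsup_of_le_add {β ι : Type*} [Finite ι] {l : Filter β} {u e : β → ℝ}
    {v : ι → β → ℝ} (he : Tendsto e l (𝓝 0)) (hu : IsCoboundedUnder (· ≤ ·) l u)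
    (hv : ∀ i, IsBoundedUnder (· ≤ ·) l (v i)) (h : ∀ᶠ x in l, ∃ i, u x ≤ e x + v i x) :
    limsup u l ≤ ⨆ i, limsup (v i) l := by
  refine le_of_forall_pos_le_add fun ε hε => limsup_le_of_le hu ?_
  have he' : ∀ᶠ x in l, e x < ε / 2 := he.eventually_lt_const (half_pos hε)
  have hv' : ∀ᶠ x in l, ∀ i, v i x < limsup (v i) l + ε / 2 :=
    eventually_all.mpr fun i => eventually_lt_of_limsup_lt (by linarith) (hv i)
  filter_upwards [h, he', hv'] with x ⟨i, hi⟩ hex hvx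
  have : limsup (v i) l ≤ ⨆ i, limsup (v i) l :=
    le_ciSup (Set.finite_range fun j => limsup (v j) l).bddAbove i
  linarith [hvx i]

section BoxDimension

lemma eventually_mem_Ioo_nhdsGT_zero : ∀ᶠ δ in 𝓝[>] (0 : ℝ), δ ∈ Ioo 0 1 :=
  Ioo_mem_nhdsGT one_pos

lemma tendsto_div_neg_log_nhdsGT_zero (c : ℝ) :
    Tendsto (fun δ : ℝ => c / -Real.log δ) (𝓝[>] 0) (𝓝 0) :=
  tendsto_const_nhds.div_atTop (tendsto_neg_atBot_atTop.comp Real.tendsto_log_nhdsGT_zero)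

lemma log_div_neg_log_le_of_le_mul {a K y δ : ℝ} (ha : 0 < a) (hK : 0 ≤ K) (h : a ≤ K * y)
    (hδ : δ ∈ Ioo 0 1) :
    Real.log a / -Real.log δ ≤ Real.log K / -Real.log δ + Real.log y / -Real.log δ := by
  have hy : 0 < y := pos_of_mul_pos_right (ha.trans_le h) hK
  have hK' : 0 < K := pos_of_mul_pos_left (ha.trans_le h) hy.le
  rw [← add_div, ← Real.log_mul hK'.ne' hy.ne']
  exact div_le_div_of_nonneg_right (Real.log_le_log ha h)
    (neg_nonneg.mpr (Real.log_nonpos hδ.1.le hδ.2.le))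

variable {α : Type*} [PseudoMetricSpace α]

lemma isCoboundedUnder_le_boxRatio (F : Set α) :
    IsCoboundedUnder (· ≤ ·) (𝓝[>] 0) fun δ : ℝ => Real.log (coverNum F δ) / -Real.log δ :=
  IsBoundedUnder.isCoboundedUnder_le ⟨0, eventually_map.mpr <|
    eventually_mem_Ioo_nhdsGT_zero.mono fun _ hδ =>
      div_nonneg (Real.log_natCast_nonneg _) (neg_nonneg.mpr (Real.log_nonpos hδ.1.le hδ.2.le))⟩

lemma isBoundedUnder_boxRatio_of_coverNum_le {F : Set α} {K : ℝ} (hK : 0 ≤ K) (k : ℕ)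
    (h : ∀ᶠ δ in 𝓝[>] 0, (coverNum F δ : ℝ) ≤ K * (δ ^ k)⁻¹) :
    IsBoundedUnder (· ≤ ·) (𝓝[>] 0) fun δ : ℝ => Real.log (coverNum F δ) / -Real.log δ := by
  refine ⟨1 + k, eventually_map.mpr ?_⟩
  filter_upwards [h, eventually_mem_Ioo_nhdsGT_zero,
    (tendsto_div_neg_log_nhdsGT_zero (Real.log K)).eventually_lt_const one_pos] with δ hN hδ hKδ
  have hlog : 0 < -Real.log δ := neg_pos.mpr (Real.log_neg hδ.1 hδ.2)
  rcases (coverNum F δ).eq_zero_or_pos with h0 | hpos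
  · rw [h0, Nat.cast_zero, Real.log_zero, zero_div]
    positivity
  · have := log_div_neg_log_le_of_le_mul (Nat.cast_pos.mpr hpos) hK hN hδ
    rw [Real.log_inv, Real.log_pow, neg_div_neg_eq,
      mul_div_cancel_right₀ _ (neg_ne_zero.mp hlog.ne')] at this
    linarith

lemma upperBoxDim_le_iSup_of_coverNum_le {ι : Type*} [Finite ι] {F : Set α} {E : ι → Set α}
    {K : ℝ} (hK : 0 ≤ K)
    (hE : ∀ i, IsBoundedUnder (· ≤ ·) (𝓝[>] 0)
      fun δ : ℝ => Real.log (coverNum (E i) δ) / -Real.log δ)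
    (h : ∀ᶠ δ in 𝓝[>] 0, 0 < coverNum F δ ∧ ∃ i, (coverNum F δ : ℝ) ≤ K * coverNum (E i) δ) :
    upperBoxDim F ≤ ⨆ i, upperBoxDim (E i) := by
  refine limsup_le_iSup_limsup_of_le_add (tendsto_div_neg_log_nhdsGT_zero (Real.log K))
    (isCoboundedUnder_le_boxRatio F) hE ?_
  filter_upwards [h, eventually_mem_Ioo_nhdsGT_zero] with δ ⟨hpos, i, hi⟩ hδ
  exact ⟨i, log_div_neg_log_le_of_le_mul (Nat.cast_pos.mpr hpos) hK hi hδ⟩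

end BoxDimension

section RealLine

variable {ι : Type*} {δ : ℝ}

lemma sub_le_of_Icc_subset_biUnion_closedBall (u : Finset ι) (c : ι → ℝ) (hδ : 0 ≤ δ) {x y : ℝ}
    (h : Icc x y ⊆ ⋃ p ∈ u, closedBall (c p) δ) : y - x ≤ 2 * δ * u.card := by
  have hvol : ENNReal.ofReal (y - x) ≤ ENNReal.ofReal (2 * δ * u.card) := calc
    ENNReal.ofReal (y - x) = MeasureTheory.volume (Icc x y) := Real.volume_Icc.symm
    _ ≤ ∑ p ∈ u, MeasureTheory.volume (closedBall (c p) δ) :=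
      (MeasureTheory.measure_mono h).trans (MeasureTheory.measure_biUnion_finset_le u _)
    _ = ENNReal.ofReal (2 * δ * u.card) := by
      simp [Real.volume_closedBall, mul_comm]
  exact (ENNReal.ofReal_le_ofReal_iff (by positivity)).mp hvol

lemma IsPreconnected.diam_le_of_subset_biUnion_closedBall {S : Set ℝ} (hS : IsPreconnected S)
    (u : Finset ι) (c : ι → ℝ) (hδ : 0 ≤ δ) (h : S ⊆ ⋃ p ∈ u, closedBall (c p) δ) :
    diam S ≤ 2 * δ * u.card := by
  refine diam_le_of_forall_dist_le (by positivity) fun x hx y hy => ?_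
  wlog hxy : x ≤ y generalizing x y
  · rw [dist_comm]
    exact this y hy x hx (le_of_not_ge hxy)
  rw [Real.dist_eq, abs_sub_comm, abs_of_nonneg (sub_nonneg.mpr hxy)]
  exact sub_le_of_Icc_subset_biUnion_closedBall u c hδ ((hS.Icc_subset hx hy).trans h)

lemma Bornology.IsBounded.subset_biUnion_closedBall {S : Set ℝ} (hS : Bornology.IsBounded S)
    (hδ : 0 < δ) :
    S ⊆ ⋃ k ∈ Finset.range (⌊diam S / (2 * δ)⌋₊ + 1), closedBall (sInf S + δ + 2 * δ * k) δ := by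
  intro y hy
  have hlow : sInf S ≤ y := csInf_le hS.bddBelow hy
  have hup : y - sInf S ≤ diam S := by
    rw [Real.diam_eq hS]
    linarith [le_csSup hS.bddAbove hy]
  set k := ⌊(y - sInf S) / (2 * δ)⌋₊
  have hk : 2 * δ * k ≤ y - sInf S := by
    rw [mul_comm, ← le_div_iff₀ (by positivity)]
    exact Nat.floor_le (div_nonneg (sub_nonneg.mpr hlow) (by positivity))
  have hk' : y - sInf S < 2 * δ * (k + 1) := by
    rw [mul_comm, ← div_lt_iff₀ (by positivity)]
    exact Nat.lt_floor_add_one _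
  refine mem_iUnion₂.mpr ⟨k, Finset.mem_range.mpr (Nat.lt_succ_of_le ?_), ?_⟩
  · exact Nat.floor_le_floor (div_le_div_of_nonneg_right hup (by positivity))
  · rw [mem_closedBall, Real.dist_eq, abs_le]
    constructor <;> linarith

lemma Finset.card_le_add_one_of_forall_le_add {s : Finset ℕ} {k : ℕ}
    (h : ∀ a ∈ s, ∀ b ∈ s, a ≤ b + k) : s.card ≤ k + 1 := by
  rcases s.eq_empty_or_nonempty with rfl | hne
  · simp
  · calc s.card ≤ (Finset.Icc (s.min' hne) (s.min' hne + k)).card :=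
          Finset.card_le_card fun b hb =>
            Finset.mem_Icc.mpr ⟨s.min'_le b hb, h b hb _ (s.min'_mem hne)⟩
      _ = k + 1 := by rw [Nat.card_Icc]; omega

end RealLine

section Oscillation

variable {s : Set ℝ} {g₁ g₂ : ℝ → ℝ}

lemma diam_image_add_le (h₁ : Bornology.IsBounded (g₁ '' s))
    (h₂ : Bornology.IsBounded (g₂ '' s)) :
    diam ((fun x => g₁ x + g₂ x) '' s) ≤ diam (g₁ '' s) + diam (g₂ '' s) := by
  refine diam_le_of_forall_dist_le (add_nonneg diam_nonneg diam_nonneg) ?_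
  rintro _ ⟨x, hx, rfl⟩ _ ⟨y, hy, rfl⟩
  exact (dist_add_add_le _ _ _ _).trans (add_le_add
    (dist_le_diam_of_mem h₁ (mem_image_of_mem _ hx) (mem_image_of_mem _ hy))
    (dist_le_diam_of_mem h₂ (mem_image_of_mem _ hx) (mem_image_of_mem _ hy)))

lemma diam_image_mul_le (h₁ : Bornology.IsBounded (g₁ '' s))
    (h₂ : Bornology.IsBounded (g₂ '' s)) {M₁ M₂ : ℝ} (hM₁ : 0 ≤ M₁) (hM₂ : 0 ≤ M₂)
    (hg₁ : ∀ x ∈ s, |g₁ x| ≤ M₁) (hg₂ : ∀ x ∈ s, |g₂ x| ≤ M₂) :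
    diam ((fun x => g₁ x * g₂ x) '' s) ≤ M₁ * diam (g₂ '' s) + M₂ * diam (g₁ '' s) := by
  refine diam_le_of_forall_dist_le (by positivity) ?_
  rintro _ ⟨x, hx, rfl⟩ _ ⟨y, hy, rfl⟩
  have d₁ := dist_le_diam_of_mem h₁ (mem_image_of_mem _ hx) (mem_image_of_mem _ hy)
  have d₂ := dist_le_diam_of_mem h₂ (mem_image_of_mem _ hx) (mem_image_of_mem _ hy)
  rw [Real.dist_eq] at d₁ d₂ ⊢
  calc |g₁ x * g₂ x - g₁ y * g₂ y| = |g₁ x * (g₂ x - g₂ y) + g₂ y * (g₁ x - g₁ y)| := by ring_nf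
    _ ≤ |g₁ x| * |g₂ x - g₂ y| + |g₂ y| * |g₁ x - g₁ y| := by
      rw [← abs_mul, ← abs_mul]; exact abs_add_le _ _
    _ ≤ M₁ * diam (g₂ '' s) + M₂ * diam (g₁ '' s) := by
      gcongr
      exacts [hg₁ x hx, hg₂ y hy]

end Oscillation

def column (δ : ℝ) (i : ℕ) : Set ℝ := Icc (i * δ) (i * δ + δ) ∩ Icc 0 1

noncomputable def oscSum (g : ℝ → ℝ) (δ : ℝ) : ℝ :=
  ∑ i ∈ Finset.range (⌊δ⁻¹⌋₊ + 1), diam (g '' column δ i)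

section Columns

variable {δ : ℝ} {i : ℕ}

lemma column_subset_Icc : column δ i ⊆ Icc 0 1 := inter_subset_right

lemma column_subset_closedBall (hδ : 0 ≤ δ) : column δ i ⊆ closedBall (i * δ) δ := by
  rintro x ⟨⟨h₁, h₂⟩, -⟩
  rw [mem_closedBall, Real.dist_eq, abs_le]
  constructor <;> linarith

lemma isCompact_column : IsCompact (column δ i) := isCompact_Icc.inter isCompact_Icc

lemma isPreconnected_column : IsPreconnected (column δ i) := by
  rw [column, Icc_inter_Icc]
  exact isPreconnected_Icc

lemma mem_column_floor (hδ : 0 < δ) {x : ℝ} (hx : x ∈ Icc 0 1) :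
    x ∈ column δ ⌊x / δ⌋₊ ∧ ⌊x / δ⌋₊ ∈ Finset.range (⌊δ⁻¹⌋₊ + 1) := by
  have h₁ : ⌊x / δ⌋₊ * δ ≤ x := by
    rw [← le_div_iff₀ hδ]; exact Nat.floor_le (div_nonneg hx.1 hδ.le)
  have h₂ : x < ⌊x / δ⌋₊ * δ + δ := by
    rw [← add_one_mul, ← div_lt_iff₀ hδ]; exact Nat.lt_floor_add_one _
  refine ⟨⟨⟨h₁, h₂.le⟩, hx⟩, Finset.mem_range.mpr (Nat.lt_succ_of_le (Nat.floor_le_floor ?_))⟩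
  rw [← one_div]
  exact div_le_div_of_nonneg_right hx.2 hδ.le

end Columns

section OscSum

variable {g g₁ g₂ : ℝ → ℝ} {δ : ℝ}

lemma isCompact_image_column (hg : ContinuousOn g (Icc 0 1)) (i : ℕ) :
    IsCompact (g '' column δ i) :=
  isCompact_column.image_of_continuousOn (hg.mono column_subset_Icc)

lemma oscSum_nonneg : 0 ≤ oscSum g δ := Finset.sum_nonneg fun _ _ => diam_nonneg

lemma oscSum_add_le (hg₁ : ContinuousOn g₁ (Icc 0 1)) (hg₂ : ContinuousOn g₂ (Icc 0 1)) :
    oscSum (fun x => g₁ x + g₂ x) δ ≤ oscSum g₁ δ + oscSum g₂ δ := by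
  rw [oscSum, oscSum, oscSum, ← Finset.sum_add_distrib]
  exact Finset.sum_le_sum fun i _ => diam_image_add_le
    (isCompact_image_column hg₁ i).isBounded (isCompact_image_column hg₂ i).isBounded

lemma oscSum_mul_le (hg₁ : ContinuousOn g₁ (Icc 0 1)) (hg₂ : ContinuousOn g₂ (Icc 0 1))
    {M₁ M₂ : ℝ} (hM₁ : 0 ≤ M₁) (hM₂ : 0 ≤ M₂) (hb₁ : ∀ x ∈ Icc 0 1, |g₁ x| ≤ M₁)
    (hb₂ : ∀ x ∈ Icc 0 1, |g₂ x| ≤ M₂) :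
    oscSum (fun x => g₁ x * g₂ x) δ ≤ M₁ * oscSum g₂ δ + M₂ * oscSum g₁ δ := by
  rw [oscSum, oscSum, oscSum, Finset.mul_sum, Finset.mul_sum, ← Finset.sum_add_distrib]
  exact Finset.sum_le_sum fun i _ => diam_image_mul_le
    (isCompact_image_column hg₁ i).isBounded (isCompact_image_column hg₂ i).isBounded hM₁ hM₂
    (fun x hx => hb₁ x (column_subset_Icc hx)) (fun x hx => hb₂ x (column_subset_Icc hx))

lemma oscSum_const (c : ℝ) : oscSum (fun _ => c) δ = 0 :=
  Finset.sum_eq_zero fun _ _ =>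
    diam_subsingleton (subsingleton_singleton.anti (image_subset_iff.mpr fun _ _ => rfl))

lemma oscSum_le_mul_diam (hg : ContinuousOn g (Icc 0 1)) :
    oscSum g δ ≤ (⌊δ⁻¹⌋₊ + 1) * diam (g '' Icc 0 1) := by
  calc oscSum g δ ≤ ∑ _i ∈ Finset.range (⌊δ⁻¹⌋₊ + 1), diam (g '' Icc 0 1) :=
        Finset.sum_le_sum fun _ _ => diam_mono (image_mono column_subset_Icc)
          (isCompact_Icc.image_of_continuousOn hg).isBounded
    _ = (⌊δ⁻¹⌋₊ + 1) * diam (g '' Icc 0 1) := by simp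

end OscSum

section Graph

variable {g : ℝ → ℝ} {δ : ℝ}

lemma isCompact_G (hg : ContinuousOn g (Icc 0 1)) : IsCompact (G g) :=
  isCompact_Icc.image_of_continuousOn (continuousOn_id.prodMk hg)

lemma G_nonempty : (G g).Nonempty := ⟨_, mem_image_of_mem _ (left_mem_Icc.mpr zero_le_one)⟩

lemma graph_subset_biUnion_closedBall {s : Set ℝ} {x₀ : ℝ} (hδ : 0 < δ)
    (hs : s ⊆ closedBall x₀ δ) (hg : Bornology.IsBounded (g '' s)) :
    (fun x => (x, g x)) '' s ⊆ ⋃ p ∈ (Finset.range (⌊diam (g '' s) / (2 * δ)⌋₊ + 1)).image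
      (fun k : ℕ => (x₀, sInf (g '' s) + δ + 2 * δ * k)), closedBall p δ := by
  rintro _ ⟨x, hx, rfl⟩
  obtain ⟨k, hk, hball⟩ := mem_iUnion₂.mp (hg.subset_biUnion_closedBall hδ (mem_image_of_mem g hx))
  refine mem_iUnion₂.mpr ⟨_, Finset.mem_image_of_mem _ hk, ?_⟩
  rw [← closedBall_prod_same]
  exact ⟨hs hx, hball⟩

lemma coverNum_G_le (hg : ContinuousOn g (Icc 0 1)) (hδ : 0 < δ) :
    (coverNum (G g) δ : ℝ) ≤ oscSum g δ / (2 * δ) + (⌊δ⁻¹⌋₊ + 1) := by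
  have hcover : G g ⊆ ⋃ i ∈ Finset.range (⌊δ⁻¹⌋₊ + 1), ⋃ p ∈
      (Finset.range (⌊diam (g '' column δ i) / (2 * δ)⌋₊ + 1)).image
        (fun k : ℕ => ((i : ℝ) * δ, sInf (g '' column δ i) + δ + 2 * δ * k)),
      closedBall p δ := by
    rintro _ ⟨x, hx, rfl⟩
    obtain ⟨hxi, hi⟩ := mem_column_floor hδ hx
    exact mem_biUnion hi (graph_subset_biUnion_closedBall hδ (column_subset_closedBall hδ.le)
      (isCompact_image_column hg _).isBounded (mem_image_of_mem _ hxi))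
  calc (coverNum (G g) δ : ℝ)
      ≤ ∑ i ∈ Finset.range (⌊δ⁻¹⌋₊ + 1), ((⌊diam (g '' column δ i) / (2 * δ)⌋₊ : ℝ) + 1) := by
        refine (Nat.cast_le.mpr (coverNum_le_sum_card _ _ hcover)).trans ?_
        push_cast
        gcongr with i
        exact_mod_cast Finset.card_image_le.trans (Finset.card_range _).le
    _ ≤ ∑ i ∈ Finset.range (⌊δ⁻¹⌋₊ + 1), (diam (g '' column δ i) / (2 * δ) + 1) := by
        gcongr with i
        exact Nat.floor_le (div_nonneg diam_nonneg (by positivity))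
    _ = oscSum g δ / (2 * δ) + (⌊δ⁻¹⌋₊ + 1) := by
        rw [Finset.sum_add_distrib, oscSum, Finset.sum_div]
        simp

lemma coverNum_G_mul_le (hg : ContinuousOn g (Icc 0 1)) (hδ : 0 < δ) (hδ₁ : δ ≤ 1) :
    (coverNum (G g) δ : ℝ) * δ ≤ 2 * (1 + oscSum g δ) := by
  have hfloor : (⌊δ⁻¹⌋₊ : ℝ) * δ ≤ 1 := by
    rw [← le_div_iff₀ hδ, one_div]; exact Nat.floor_le (by positivity)
  have := mul_le_mul_of_nonneg_right (coverNum_G_le hg hδ) hδ.le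
  have hosc : oscSum g δ / (2 * δ) * δ = oscSum g δ / 2 := by field_simp
  rw [add_mul, hosc, add_one_mul] at this
  linarith [oscSum_nonneg (g := g) (δ := δ)]

lemma oscSum_le_of_G_subset_biUnion (hg : ContinuousOn g (Icc 0 1)) (hδ : 0 < δ)
    {t : Finset (ℝ × ℝ)} (ht : G g ⊆ ⋃ p ∈ t, closedBall p δ) :
    oscSum g δ ≤ 10 * δ * t.card := by
  let near (i : ℕ) (p : ℝ × ℝ) : Prop := dist p.1 (i * δ) ≤ 2 * δ
  have hcol : ∀ i, diam (g '' column δ i) ≤ 2 * δ * (t.bipartiteAbove near i).card := by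
    intro i
    refine (isPreconnected_column.image g (hg.mono column_subset_Icc))
      |>.diam_le_of_subset_biUnion_closedBall _ Prod.snd hδ.le ?_
    rintro _ ⟨x, hx, rfl⟩
    obtain ⟨p, hp, hxp⟩ := mem_iUnion₂.mp (ht (mem_image_of_mem _ (column_subset_Icc hx)))
    rw [← closedBall_prod_same] at hxp
    have hpi : near i p := calc
      dist p.1 (i * δ) ≤ dist p.1 x + dist x (i * δ) := dist_triangle _ _ _
      _ ≤ δ + δ := add_le_add (dist_comm x p.1 ▸ hxp.1) (column_subset_closedBall hδ.le hx)
      _ = 2 * δ := by ring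
    exact mem_iUnion₂.mpr ⟨p, (Finset.mem_bipartiteAbove near).mpr ⟨hp, hpi⟩, hxp.2⟩
  -- the left ends of the columns are `δ` apart, so a ball is `near` at most five of them
  have hcount : ∀ p ∈ t, ((Finset.range (⌊δ⁻¹⌋₊ + 1)).bipartiteBelow near p).card ≤ 5 := by
    intro p _
    refine Finset.card_le_add_one_of_forall_le_add fun a ha b hb => ?_
    have ha' := abs_le.mp ((Finset.mem_bipartiteBelow near).mp ha).2
    have hb' := abs_le.mp ((Finset.mem_bipartiteBelow near).mp hb).2
    have : (a : ℝ) * δ ≤ (b + 4) * δ := by linarith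
    exact_mod_cast le_of_mul_le_mul_right this hδ
  have hdouble : ∑ i ∈ Finset.range (⌊δ⁻¹⌋₊ + 1), (t.bipartiteAbove near i).card ≤ 5 * t.card := by
    rw [Finset.sum_card_bipartiteAbove_eq_sum_card_bipartiteBelow, mul_comm 5]
    exact Finset.sum_le_card_nsmul _ _ _ hcount
  calc oscSum g δ ≤ ∑ i ∈ Finset.range (⌊δ⁻¹⌋₊ + 1), 2 * δ * (t.bipartiteAbove near i).card :=
        Finset.sum_le_sum fun i _ => hcol i
    _ = 2 * δ * ((∑ i ∈ Finset.range (⌊δ⁻¹⌋₊ + 1), (t.bipartiteAbove near i).card : ℕ) : ℝ) := by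
        rw [Nat.cast_sum, Finset.mul_sum]
    _ ≤ 2 * δ * (5 * t.card : ℕ) := by gcongr
    _ = 10 * δ * t.card := by push_cast; ring

lemma one_le_of_G_subset_biUnion (hδ : 0 < δ) {t : Finset (ℝ × ℝ)}
    (ht : G g ⊆ ⋃ p ∈ t, closedBall p δ) : 1 ≤ 2 * δ * t.card := by
  have hproj : Icc (0 : ℝ) 1 ⊆ ⋃ p ∈ t, closedBall p.1 δ := fun x hx => by
    obtain ⟨p, hp, hxp⟩ := mem_iUnion₂.mp (ht (mem_image_of_mem _ hx))
    rw [← closedBall_prod_same] at hxp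
    exact mem_iUnion₂.mpr ⟨p, hp, hxp.1⟩
  simpa using sub_le_of_Icc_subset_biUnion_closedBall t Prod.fst hδ.le hproj

lemma one_add_oscSum_le_coverNum_G (hg : ContinuousOn g (Icc 0 1)) (hδ : 0 < δ) :
    1 + oscSum g δ ≤ 12 * δ * coverNum (G g) δ := by
  obtain ⟨t, ht, hcover⟩ := (isCompact_G hg).exists_card_eq_coverNum hδ
  rw [← ht]
  linarith [one_le_of_G_subset_biUnion hδ hcover, oscSum_le_of_G_subset_biUnion hg hδ hcover]

lemma isBoundedUnder_boxRatio_G (hg : ContinuousOn g (Icc 0 1)) :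
    IsBoundedUnder (· ≤ ·) (𝓝[>] 0) fun δ : ℝ => Real.log (coverNum (G g) δ) / -Real.log δ := by
  set D := diam (g '' Icc 0 1)
  have hD : 0 ≤ D := diam_nonneg
  refine isBoundedUnder_boxRatio_of_coverNum_le (K := 2 + 4 * D) (by positivity) 2 ?_
  filter_upwards [eventually_mem_Ioo_nhdsGT_zero] with δ ⟨hδ, hδ₁⟩
  have hcols : (⌊δ⁻¹⌋₊ + 1 : ℝ) * δ ≤ 2 := by
    have : (⌊δ⁻¹⌋₊ : ℝ) * δ ≤ 1 := by
      rw [← le_div_iff₀ hδ, one_div]; exact Nat.floor_le (by positivity)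
    linarith
  have hosc : oscSum g δ * δ ≤ 2 * D := calc
    oscSum g δ * δ ≤ (⌊δ⁻¹⌋₊ + 1) * D * δ := by gcongr; exact oscSum_le_mul_diam hg
    _ ≤ 2 * D := by nlinarith
  rw [← div_eq_mul_inv, le_div_iff₀ (by positivity)]
  calc (coverNum (G g) δ : ℝ) * δ ^ 2 = coverNum (G g) δ * δ * δ := by ring
    _ ≤ 2 * (1 + oscSum g δ) * δ :=
        mul_le_mul_of_nonneg_right (coverNum_G_mul_le hg hδ hδ₁.le) hδ.le
    _ ≤ 2 + 4 * D := by nlinarith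

lemma exists_coverNum_G_le_of_oscSum_le {ι : Type*} [Fintype ι] [Nonempty ι] {h : ι → ℝ → ℝ}
    (hg : ContinuousOn g (Icc 0 1)) (hh : ∀ i, ContinuousOn (h i) (Icc 0 1)) {C δ : ℝ}
    (hC : 0 ≤ C) (hδ : 0 < δ) (hδ₁ : δ ≤ 1) (hle : oscSum g δ ≤ C * ∑ i, oscSum (h i) δ) :
    ∃ i, (coverNum (G g) δ : ℝ) ≤ 24 * (1 + C) * Fintype.card ι * coverNum (G (h i)) δ := by
  obtain ⟨j, -, hj⟩ := Finset.exists_max_image Finset.univ (fun i => coverNum (G (h i)) δ)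
    Finset.univ_nonempty
  have hS : 0 ≤ ∑ i, oscSum (h i) δ := Finset.sum_nonneg fun _ _ => oscSum_nonneg
  have hcard : (1 : ℝ) ≤ Fintype.card ι := Nat.one_le_cast.mpr Fintype.card_pos
  refine ⟨j, le_of_mul_le_mul_right ?_ hδ⟩
  calc (coverNum (G g) δ : ℝ) * δ ≤ 2 * (1 + oscSum g δ) := coverNum_G_mul_le hg hδ hδ₁
    _ ≤ 2 * (1 + C) * ∑ i, (1 + oscSum (h i) δ) := by
        rw [Finset.sum_add_distrib, Finset.sum_const, Finset.card_univ, nsmul_one]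
        nlinarith
    _ ≤ 2 * (1 + C) * ∑ i, 12 * δ * (coverNum (G (h i)) δ : ℝ) := by
        gcongr with i
        exact one_add_oscSum_le_coverNum_G (hh i) hδ
    _ ≤ 2 * (1 + C) * ∑ _i : ι, 12 * δ * (coverNum (G (h j)) δ : ℝ) := by
        gcongr with i
        exact hj i (Finset.mem_univ i)
    _ = 24 * (1 + C) * Fintype.card ι * coverNum (G (h j)) δ * δ := by
        rw [Finset.sum_const, Finset.card_univ, nsmul_eq_mul]
        ring

end Graph

section ContinuousMap

variable (f : C(Icc (0 : ℝ) 1, ℝ))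

lemma continuousOn_IccExtend : ContinuousOn (IccExtend zero_le_one f) (Icc 0 1) :=
  f.continuous.Icc_extend'.continuousOn

lemma abs_IccExtend_le (x : ℝ) : |IccExtend zero_le_one f x| ≤ ‖f‖ :=
  f.norm_coe_le_norm _

lemma graphC_eq_G : graphC f = G (IccExtend zero_le_one f) := by
  ext p
  simp only [graphC, G, fnGraphOn, mem_range, mem_image, Subtype.exists]
  refine exists_congr fun x => ⟨fun ⟨hx, hp⟩ => ⟨hx, ?_⟩, fun ⟨hx, hp⟩ => ⟨hx, ?_⟩⟩
  · rwa [IccExtend_of_mem _ _ hx]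
  · rwa [IccExtend_of_mem _ _ hx] at hp

end ContinuousMap

lemma exists_oscSum_le_of_mem_adjoin {ι : Type*} [Fintype ι] (f : ι → C(Icc (0 : ℝ) 1, ℝ))
    {r : C(Icc (0 : ℝ) 1, ℝ)} (hr : r ∈ Algebra.adjoin ℝ (range f)) :
    ∃ C, 0 ≤ C ∧ ∀ δ, oscSum (IccExtend zero_le_one r) δ
      ≤ C * ∑ i, oscSum (IccExtend zero_le_one (f i)) δ := by
  induction hr using Algebra.adjoin_induction with
  | mem x hx =>
    obtain ⟨j, rfl⟩ := hx
    refine ⟨1, zero_le_one, fun δ => ?_⟩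
    rw [one_mul]
    exact Finset.single_le_sum (f := fun i => oscSum (IccExtend zero_le_one (f i)) δ)
      (fun _ _ => oscSum_nonneg) (Finset.mem_univ j)
  | algebraMap c =>
    refine ⟨0, le_rfl, fun δ => ?_⟩
    rw [zero_mul]
    exact (oscSum_const c).le
  | add x y _ _ ihx ihy =>
    obtain ⟨Cx, hCx, hx⟩ := ihx
    obtain ⟨Cy, hCy, hy⟩ := ihy
    refine ⟨Cx + Cy, add_nonneg hCx hCy, fun δ => ?_⟩
    rw [add_mul]
    exact (oscSum_add_le (continuousOn_IccExtend x) (continuousOn_IccExtend y)).trans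
      (add_le_add (hx δ) (hy δ))
  | mul x y _ _ ihx ihy =>
    obtain ⟨Cx, hCx, hx⟩ := ihx
    obtain ⟨Cy, hCy, hy⟩ := ihy
    refine ⟨‖x‖ * Cy + ‖y‖ * Cx, by positivity, fun δ => ?_⟩
    calc oscSum (IccExtend zero_le_one ⇑(x * y)) δ
        ≤ ‖x‖ * oscSum (IccExtend zero_le_one y) δ + ‖y‖ * oscSum (IccExtend zero_le_one x) δ :=
          oscSum_mul_le (continuousOn_IccExtend x) (continuousOn_IccExtend y) (norm_nonneg x)
            (norm_nonneg y) (fun t _ => abs_IccExtend_le x t) (fun t _ => abs_IccExtend_le y t)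
      _ ≤ _ := by
          rw [add_mul, mul_assoc, mul_assoc]
          gcongr
          exacts [hy δ, hx δ]

theorem upperBoxDim_graph_polynomial_many (m : ℕ) (hm : 0 < m)
    (f : Fin m → C(↥(Set.Icc (0:ℝ) 1), ℝ)) (r : C(↥(Set.Icc (0:ℝ) 1), ℝ))
    (hr : r ∈ Algebra.adjoin ℝ (Set.range f)) :
    upperBoxDim (graphC r) ≤ ⨆ i, upperBoxDim (graphC (f i)) := by
  have : Nonempty (Fin m) := ⟨⟨0, hm⟩⟩
  obtain ⟨C, hC, hosc⟩ := exists_oscSum_le_of_mem_adjoin f hr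
  simp only [graphC_eq_G]
  refine upperBoxDim_le_iSup_of_coverNum_le (K := 24 * (1 + C) * m) (by positivity)
    (fun i => isBoundedUnder_boxRatio_G (continuousOn_IccExtend (f i))) ?_
  filter_upwards [eventually_mem_Ioo_nhdsGT_zero] with δ hδ
  refine ⟨(isCompact_G (continuousOn_IccExtend r)).coverNum_pos G_nonempty hδ.1, ?_⟩
  simpa using exists_coverNum_G_le_of_oscSum_le (continuousOn_IccExtend r)
    (fun i => continuousOn_IccExtend (f i)) hC hδ.1 hδ.2.le (hosc δ)
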